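/- Let v : Fin n → ℝ² be a closed polygon (indices mod n) with edge vectors e_k = v_{k+1} − v_k, edge midpoints m_k = (v_k + v_{k+1})/2, scaled normals rot(e_k) where rot(x, y) = (y, −x), and shoelace signed area A ≠ 0. If φ : ℝ² → ℝ is affine, φ(x) = c + ⟪g, x⟫ for some c ∈ ℝ and g ∈ ℝ², then the Green-Gauss reconstruction formula is exact: (1/A) ∑_k φ(m_k) • rot(e_k) = g. -/

import Mathlib

open scoped RealInnerProductSpace BigOperators

/-- The clockwise quarter-turn `rot (x, y) = (y, -x)` in the plane. -/
noncomputable def rot (w : EuclideanSpace ℝ (Fin 2)) : EuclideanSpace ℝ (Fin 2) :=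
  (WithLp.equiv 2 (Fin 2 → ℝ)).symm ![w 1, -(w 0)]

/-!
Write `cross a b = ⟪a, rot b⟫ = a₀b₁ - a₁b₀`. Expanding the midpoint value of `⟪g, ·⟫`,
`⟪g, a + b⟫ • rot (b - a) = (⟪g, b⟫ • rot b - ⟪g, a⟫ • rot a) + cross a b • g`:
the bracket telescopes around the closed polygon and the cross products sum to `2A`.
The constant part of `φ` contributes `c • ∑ rot (e k) = c • rot (∑ e k) = 0`.
-/

open Finset

theorem Fin.sum_sub_add_one_eq_zero {M : Type*} [AddCommGroup M] {n : ℕ} [NeZero n]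
    (f : Fin n → M) : ∑ k : Fin n, (f (k + 1) - f k) = 0 := by
  rw [sum_sub_distrib, sub_eq_zero]
  exact Equiv.sum_comp (Equiv.addRight 1) f

namespace EuclideanSpace

theorem inner_fin_two (x y : EuclideanSpace ℝ (Fin 2)) : ⟪x, y⟫ = x 0 * y 0 + x 1 * y 1 := by
  simp [PiLp.inner_apply, Fin.sum_univ_two, mul_comm]

end EuclideanSpace

@[simp]
theorem rot_apply_zero (w : EuclideanSpace ℝ (Fin 2)) : rot w 0 = w 1 := rfl

@[simp]
theorem rot_apply_one (w : EuclideanSpace ℝ (Fin 2)) : rot w 1 = -w 0 := rfl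

theorem rot_sub (a b : EuclideanSpace ℝ (Fin 2)) : rot (a - b) = rot a - rot b := by
  ext i; fin_cases i <;> simp [sub_eq_add_neg, add_comm]

theorem inner_rot_right (a b : EuclideanSpace ℝ (Fin 2)) :
    ⟪a, rot b⟫ = a 0 * b 1 - b 0 * a 1 := by
  rw [EuclideanSpace.inner_fin_two]; simp; ring

theorem inner_smul_rot_sub_inner_smul_rot (g a b : EuclideanSpace ℝ (Fin 2)) :
    ⟪g, a⟫ • rot b - ⟪g, b⟫ • rot a = ⟪a, rot b⟫ • g := by
  ext i
  fin_cases i <;> simp [EuclideanSpace.inner_fin_two] <;> ring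

theorem inner_add_smul_rot_sub (g a b : EuclideanSpace ℝ (Fin 2)) :
    ⟪g, a + b⟫ • rot (b - a) = (⟪g, b⟫ • rot b - ⟪g, a⟫ • rot a) + ⟪a, rot b⟫ • g := by
  rw [← inner_smul_rot_sub_inner_smul_rot, inner_add_right, rot_sub, smul_sub, add_smul,
    add_smul]
  abel

section Polygon

variable {n : ℕ} [NeZero n] (v : Fin n → EuclideanSpace ℝ (Fin 2))

theorem sum_rot_edge_eq_zero : ∑ k : Fin n, rot (v (k + 1) - v k) = 0 := by
  simp_rw [rot_sub]
  exact Fin.sum_sub_add_one_eq_zero (rot ∘ v)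

theorem sum_inner_add_smul_rot_edge (g : EuclideanSpace ℝ (Fin 2)) :
    ∑ k : Fin n, ⟪g, v k + v (k + 1)⟫ • rot (v (k + 1) - v k)
      = (∑ k : Fin n, ⟪v k, rot (v (k + 1))⟫) • g := by
  simp_rw [inner_add_smul_rot_sub, sum_add_distrib, sum_smul]
  rw [Fin.sum_sub_add_one_eq_zero (fun k => ⟪g, v k⟫ • rot (v k)), zero_add]

end Polygon

/-- For a closed polygon `v : Fin n → ℝ²` (indices mod `n`) with edge vectors
`e k = v (k+1) - v k`, edge midpoints `m k = (v k + v (k+1))/2`, scaled outward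
normals `rot (e k)` and nonzero shoelace signed area `A`, the Green-Gauss
reconstruction is exact for affine fields `φ x = c + ⟪g, x⟫`:
`(1/A) ∑ k φ (m k) • rot (e k) = g`. -/
theorem greenGauss_exact_for_affine (n : ℕ) [NeZero n]
    (v : Fin n → EuclideanSpace ℝ (Fin 2))
    (A : ℝ)
    (hA : A = (1 / 2 : ℝ) * ∑ k : Fin n,
        (v k 0 * v (k + 1) 1 - v (k + 1) 0 * v k 1))
    (hA0 : A ≠ 0)
    (φ : EuclideanSpace ℝ (Fin 2) → ℝ) (c : ℝ) (g : EuclideanSpace ℝ (Fin 2))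
    (hφ : ∀ x, φ x = c + ⟪g, x⟫) :
    A⁻¹ • ∑ k : Fin n, φ ((2 : ℝ)⁻¹ • (v k + v (k + 1))) • rot (v (k + 1) - v k)
      = g := by
  have hA' : A = 2⁻¹ * ∑ k : Fin n, ⟪v k, rot (v (k + 1))⟫ := by
    simp only [hA, inner_rot_right, one_div]
  have hsum : ∑ k : Fin n, φ ((2 : ℝ)⁻¹ • (v k + v (k + 1))) • rot (v (k + 1) - v k)
      = A • g := by
    simp_rw [hφ, inner_smul_right, add_smul, mul_smul, sum_add_distrib, ← smul_sum,
      sum_rot_edge_eq_zero, sum_inner_add_smul_rot_edge, hA', mul_smul, smul_zero, zero_add]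
  rw [hsum, smul_smul, inv_mul_cancel₀ hA0, one_smul]
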